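/- In any run of MMA⁻ on a finite equation set E, if action (5') is performed at some step, then E is not unifiable (and neither is the equation set current at that step). -/

import Mathlib

/-! # First-order terms, substitutions, unification -/

inductive Term (F : Type) (V : Type) : Type
  | var : V → Term F V
  | app : F → List (Term F V) → Term F V

namespace Term

variable {F V : Type}

/-- The variable `v` occurs in the term. -/
inductive VarIn (v : V) : Term F V → Prop
  | var : VarIn v (Term.var v)
  | app {f : F} {ts : List (Term F V)} {t : Term F V} :
      t ∈ ts → VarIn v t → VarIn v (Term.app f ts)

/-- A term is ground if it contains no variables. -/
def Ground (t : Term F V) : Prop := ∀ v, ¬ VarIn v t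

/-- Application of a substitution (a map from variables to terms) to a term. -/
def subst (σ : V → Term F V) : Term F V → Term F V
  | var x => σ x
  | app f ts => app f (ts.attach.map fun ⟨t, _⟩ => t.subst σ)

/-- Number of occurrences of the variable `v` in a term. -/
def count [DecidableEq V] (v : V) : Term F V → ℕ
  | var x => if x = v then 1 else 0
  | app _ ts => (ts.attach.map fun ⟨t, _⟩ => t.count v).sum

/-- A term (or atom) is linear if no variable occurs in it more than once. -/
def Linear [DecidableEq V] (t : Term F V) : Prop := ∀ v, count v t ≤ 1

def IsVar : Term F V → Prop
  | var _ => True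
  | app _ _ => False

end Term

/-- A substitution. -/
abbrev Subst (F V : Type) := V → Term F V

/-- Composition of substitutions: `(σ.comp η)` is `ση`. -/
def Subst.comp {F V : Type} (σ η : Subst F V) : Subst F V := fun v => (σ v).subst η

/-- The substitution `{X/t}`. -/
def subst1 {F V : Type} [DecidableEq V] (X : V) (t : Term F V) : Subst F V :=
  fun v => if v = X then t else Term.var v

variable {F V : Type}

/-- `σ` unifies the two terms (or atoms) `A` and `H`. -/
def IsUnifierPair (σ : Subst F V) (A H : Term F V) : Prop := A.subst σ = H.subst σ

/-- `σ` is a most general unifier of `A` and `H`. -/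
def IsMGUPair (σ : Subst F V) (A H : Term F V) : Prop :=
  IsUnifierPair σ A H ∧ ∀ τ, IsUnifierPair τ A H → ∃ η, τ = σ.comp η

/-- An equation between terms. -/
abbrev Eqn (F V : Type) := Term F V × Term F V

/-- A set of equations. -/
abbrev EqSet (F V : Type) := Set (Eqn F V)

def Eqn.subst (σ : Subst F V) (e : Eqn F V) : Eqn F V := (e.1.subst σ, e.2.subst σ)

/-- `σ` is a unifier of the equation set `E`. -/
def IsUnifier (σ : Subst F V) (E : EqSet F V) : Prop := ∀ e ∈ E, e.1.subst σ = e.2.subst σ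

def Unifiable (E : EqSet F V) : Prop := ∃ σ, IsUnifier σ E

/-- `σ` is a most general unifier of the equation set `E`. -/
def IsMGU (σ : Subst F V) (E : EqSet F V) : Prop :=
  IsUnifier σ E ∧ ∀ τ, IsUnifier τ E → ∃ η, τ = σ.comp η

/-! # The Martelli–Montanari algorithm (MMA) and its occur-check-less version MMA⁻ -/

/-- The variable `X` occurs in the equation `e`. -/
def occursInEqn (X : V) (e : Eqn F V) : Prop := Term.VarIn X e.1 ∨ Term.VarIn X e.2

/-- The variable `X` occurs in equations of `E` other than `e`. -/
def occursElsewhere (X : V) (e : Eqn F V) (E : EqSet F V) : Prop :=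
  ∃ e' ∈ E, e' ≠ e ∧ occursInEqn X e'

/-- Action (2) of MMA is applicable: `E` contains a clash `f(s₁,…,sₘ) = g(t₁,…,tₙ)`
(distinct function symbols; in a signature with arities, the same name with different
numbers of arguments also counts as distinct symbols). -/
def Clash (E : EqSet F V) : Prop :=
  ∃ f ss g ts, (Term.app f ss, Term.app g ts) ∈ E ∧ (f ≠ g ∨ ss.length ≠ ts.length)

/-- Action (6) of MMA (the occur-check failure) is applicable to `E`. -/
def OccApplicable (E : EqSet F V) : Prop :=
  ∃ X t, (Term.var X, t) ∈ E ∧ Term.var X ≠ t ∧ Term.VarIn X t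

/-- A (non-failing) step of MMA: actions (1), (3), (4), (5). -/
inductive MMAStep [DecidableEq V] : EqSet F V → EqSet F V → Prop
  | decomp {E : EqSet F V} {f : F} {ss ts : List (Term F V)} :
      (Term.app f ss, Term.app f ts) ∈ E → ss.length = ts.length →
      MMAStep E ((E \ {(Term.app f ss, Term.app f ts)}) ∪ {e | e ∈ ss.zip ts})
  | del {E : EqSet F V} {X : V} : (Term.var X, Term.var X) ∈ E →
      MMAStep E (E \ {(Term.var X, Term.var X)})
  | orient {E : EqSet F V} {X : V} {t : Term F V} : (t, Term.var X) ∈ E → ¬ t.IsVar →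
      MMAStep E ((E \ {(t, Term.var X)}) ∪ {(Term.var X, t)})
  | elim {E : EqSet F V} {X : V} {t : Term F V} :
      (Term.var X, t) ∈ E → Term.var X ≠ t → ¬ Term.VarIn X t →
      occursElsewhere X (Term.var X, t) E →
      MMAStep E (insert (Term.var X, t) (Eqn.subst (subst1 X t) '' (E \ {(Term.var X, t)})))

/-- `E'` is reachable from `E` by (non-failing) MMA steps. -/
def MMAReach [DecidableEq V] (E E' : EqSet F V) : Prop := Relation.ReflTransGen MMAStep E E'

/-- `E` is not subject to occur-check: no run of MMA on `E` performs action (6),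
i.e. action (6) is not applicable to any equation set reachable by MMA from `E`. -/
def NSTO [DecidableEq V] (E : EqSet F V) : Prop :=
  ∀ E', MMAReach E E' → ¬ OccApplicable E'

/-- A solved equation set: `X₁=t₁, …, Xₙ=tₙ` with `X₁,…,Xₙ` distinct variables
none of which occurs in any `tᵢ`. -/
def SolvedSet (E : EqSet F V) : Prop :=
  (∀ e ∈ E, ∃ X, e.1 = Term.var X) ∧
  (∀ e ∈ E, ∀ e' ∈ E, e.1 = e'.1 → e = e') ∧
  (∀ e ∈ E, ∀ e' ∈ E, ∀ X, e.1 = Term.var X → ¬ Term.VarIn X e'.2)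

/-- The relation `X ≻_E Y`: for some equation `X = t` of `E`, `Y ∈ Var(t)`. -/
def succRel (E : EqSet F V) (X Y : V) : Prop := ∃ t, (Term.var X, t) ∈ E ∧ Term.VarIn Y t

/-- A semi-solved equation set: `X₁=t₁, …, Xₙ=tₙ` with `X₁,…,Xₙ` distinct variables,
no `tᵢ` equal to `Xᵢ`, and whenever `Xᵢ` occurs in some `tₖ` then `Xᵢ ≻⁺_E Xᵢ`. -/
def SemiSolved (E : EqSet F V) : Prop :=
  (∀ e ∈ E, ∃ X, e.1 = Term.var X) ∧
  (∀ e ∈ E, ∀ e' ∈ E, e.1 = e'.1 → e = e') ∧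
  (∀ e ∈ E, e.1 ≠ e.2) ∧
  (∀ X, (∃ e' ∈ E, Term.VarIn X e'.2) → (∃ t, (Term.var X, t) ∈ E) →
    Relation.TransGen (succRel E) X X)

/-- `σ` is the substitution represented by the (solved) equation set `E`. -/
def Represents (E : EqSet F V) (σ : Subst F V) : Prop :=
  ∀ v, (∃ t, (Term.var v, t) ∈ E ∧ σ v = t) ∨ ((∀ t, (Term.var v, t) ∉ E) ∧ σ v = Term.var v)

/-- There is an occur-check free run of MMA on `E`: a maximal run never performing
action (6), hence ending either by action (2) (failure on a clash) or with success
(no action applicable any more, the final set being solved). (MMA always terminates,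
so runs are finite.) -/
def ExistsOCFreeRun [DecidableEq V] (E : EqSet F V) : Prop :=
  ∃ E', MMAReach E E' ∧ (Clash E' ∨ SolvedSet E')

/-- `u` is obtained from `s` by replacing *some* of the occurrences of the variable `X`
by the term `t`. -/
inductive ReplSome [DecidableEq V] (X : V) (t : Term F V) : Term F V → Term F V → Prop
  | keep (v : V) : ReplSome X t (Term.var v) (Term.var v)
  | repl : ReplSome X t (Term.var X) t
  | app {f : F} {ss ts : List (Term F V)} :
      List.Forall₂ (ReplSome X t) ss ts → ReplSome X t (Term.app f ss) (Term.app f ts)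

def ReplSomeEqn [DecidableEq V] (X : V) (t : Term F V) (e e' : Eqn F V) : Prop :=
  ReplSome X t e.1 e'.1 ∧ ReplSome X t e.2 e'.2

/-- The labels of the actions of MMA⁻. -/
inductive MLabel (F V : Type) where
  | decomp | del | orient
  | elim (X : V) (t : Term F V)
  | elim' (X : V) (t : Term F V)

/-- A configuration of MMA⁻: the current equation set together with the set of
variables on which action (5) has already been performed. -/
abbrev MState (F V : Type) := EqSet F V × Set V

/-- A (non-failing) step of MMA⁻, labelled by the action used: actions (1), (3), (4),
(5) (with condition `X ≠ t` instead of the occur-check `X ∉ Var(t)`), and (5')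
(replacing some occurrences of `X` by `t` in the other equations, allowed only if
action (5) has previously been performed on an equation with left-hand side `X`). -/
inductive MMStepL [DecidableEq V] : MLabel F V → MState F V → MState F V → Prop
  | decomp {E : EqSet F V} {H : Set V} {f : F} {ss ts : List (Term F V)} :
      (Term.app f ss, Term.app f ts) ∈ E → ss.length = ts.length →
      MMStepL MLabel.decomp (E, H)
        ((E \ {(Term.app f ss, Term.app f ts)}) ∪ {e | e ∈ ss.zip ts}, H)
  | del {E : EqSet F V} {H : Set V} {X : V} : (Term.var X, Term.var X) ∈ E →
      MMStepL MLabel.del (E, H) (E \ {(Term.var X, Term.var X)}, H)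
  | orient {E : EqSet F V} {H : Set V} {X : V} {t : Term F V} :
      (t, Term.var X) ∈ E → ¬ t.IsVar →
      MMStepL MLabel.orient (E, H) ((E \ {(t, Term.var X)}) ∪ {(Term.var X, t)}, H)
  | elim {E : EqSet F V} {H : Set V} {X : V} {t : Term F V} :
      (Term.var X, t) ∈ E → Term.var X ≠ t →
      occursElsewhere X (Term.var X, t) E →
      MMStepL (MLabel.elim X t) (E, H)
        (insert (Term.var X, t) (Eqn.subst (subst1 X t) '' (E \ {(Term.var X, t)})),
         insert X H)
  | elim' {E : EqSet F V} {H : Set V} {X : V} {t : Term F V} {g : Eqn F V → Eqn F V} :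
      (Term.var X, t) ∈ E → Term.var X ≠ t →
      occursElsewhere X (Term.var X, t) E → X ∈ H →
      (∀ e ∈ E \ {(Term.var X, t)}, ReplSomeEqn X t e (g e)) →
      MMStepL (MLabel.elim' X t) (E, H)
        (insert (Term.var X, t) (g '' (E \ {(Term.var X, t)})), H)

/-- A (non-failing) step of MMA⁻. -/
def MMStep [DecidableEq V] (s s' : MState F V) : Prop := ∃ l, MMStepL l s s'

/-- Reachability by (non-failing) steps of MMA⁻. A run of MMA⁻ on an equation set `E`
starts in the configuration `(E, ∅)`; it terminates with failure when action (2) is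
performed (a clash is present), and it may terminate with success when the current
equation set is semi-solved. -/
def MMReach [DecidableEq V] (s s' : MState F V) : Prop := Relation.ReflTransGen MMStep s s'

/-!
Every action of MMA⁻ replaces the equation set by one with exactly the same unifiers
(action (5') only rewrites occurrences of `X` by `t` in presence of `X = t`), so unifiability
is invariant along a run. While the current set is unifiable, action (5) on `X = t` cannot
violate the occur-check, since no unifier solves `X = t` with `X` a proper subterm of `t`;
so it leaves `X` solved: `X` occurs only in `X = u`, with `X ∉ Var(u)`. Later actions keep
it solved. Action (5') on `X` requires `X` to occur in another equation, so it can only be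
performed on a non-unifiable set, and then `E` is not unifiable either.
-/

theorem List.map_eq_map_iff_forall₂ {α β γ : Type*} {f : α → γ} {g : β → γ} {l₁ : List α}
    {l₂ : List β} : l₁.map f = l₂.map g ↔ List.Forall₂ (fun a b => f a = g b) l₁ l₂ := by
  rw [← List.forall₂_eq_eq_eq, List.forall₂_map_left_iff, List.forall₂_map_right_iff]

namespace Term

variable {F V : Type}

theorem sizeOf_lt_of_mem {f : F} {ts : List (Term F V)} {t : Term F V} (h : t ∈ ts) :
    sizeOf t < sizeOf (app f ts) := by
  have := List.sizeOf_lt_of_mem h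
  simp only [app.sizeOf_spec]
  omega

@[elab_as_elim]
theorem induction {motive : Term F V → Prop} (var : ∀ x, motive (var x))
    (app : ∀ f ts, (∀ t ∈ ts, motive t) → motive (app f ts)) : ∀ t, motive t
  | .var x => var x
  | .app f ts => app f ts fun t _ => induction var app t
termination_by t => sizeOf t
decreasing_by exact sizeOf_lt_of_mem ‹_›

@[simp]
theorem subst_var (σ : Subst F V) (x : V) : (var x).subst σ = σ x := by
  simp [subst]

@[simp]
theorem subst_app (σ : Subst F V) (f : F) (ts : List (Term F V)) :
    (app f ts).subst σ = app f (ts.map (subst σ)) := by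
  simp [subst]

@[simp]
theorem varIn_var_iff {v w : V} : VarIn (F := F) v (var w) ↔ v = w :=
  ⟨fun h => by cases h; rfl, fun h => h ▸ .var⟩

@[simp]
theorem varIn_app_iff {v : V} {f : F} {ts : List (Term F V)} :
    VarIn v (app f ts) ↔ ∃ t ∈ ts, VarIn v t :=
  ⟨fun h => by cases h with | app ht h => exact ⟨_, ht, h⟩, fun ⟨_, ht, h⟩ => .app ht h⟩

theorem varIn_subst_iff {σ : Subst F V} {v : V} (t : Term F V) :
    VarIn v (t.subst σ) ↔ ∃ w, VarIn w t ∧ VarIn v (σ w) := by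
  induction t using induction with
  | var x => simp
  | app f ts ih =>
    simp only [subst_app, varIn_app_iff, List.mem_map]
    constructor
    · rintro ⟨_, ⟨s, hs, rfl⟩, hv⟩
      obtain ⟨w, hw, hvw⟩ := (ih s hs).1 hv
      exact ⟨w, ⟨s, hs, hw⟩, hvw⟩
    · rintro ⟨w, ⟨s, hs, hw⟩, hvw⟩
      exact ⟨_, ⟨s, hs, rfl⟩, (ih s hs).2 ⟨w, hw, hvw⟩⟩

theorem sizeOf_le_sizeOf_subst {σ : Subst F V} {v : V} {t : Term F V} (h : VarIn v t) :
    sizeOf (σ v) ≤ sizeOf (t.subst σ) := by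
  induction h with
  | var => simp
  | app hmem _ ih =>
    have := sizeOf_lt_of_mem (f := ‹F›) (List.mem_map_of_mem (f := subst σ) hmem)
    rw [subst_app]
    omega

theorem subst_ne_of_varIn {σ : Subst F V} {X : V} {t : Term F V} (hX : VarIn X t)
    (hne : t ≠ var X) : σ X ≠ t.subst σ := by
  cases hX with
  | var => exact absurd rfl hne
  | @app f ts s hs hX =>
    intro heq
    have h₁ := sizeOf_le_sizeOf_subst (σ := σ) hX
    have h₂ := sizeOf_lt_of_mem (f := f) (List.mem_map_of_mem (f := subst σ) hs)
    rw [← subst_app, ← heq] at h₂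
    omega

variable [DecidableEq V] {X : V} {t : Term F V}

theorem varIn_subst_subst1 {Z : V} {s : Term F V} (h : VarIn Z (s.subst (subst1 X t))) :
    VarIn Z t ∨ Z ≠ X ∧ VarIn Z s := by
  obtain ⟨w, hws, hw⟩ := (varIn_subst_iff s).1 h
  by_cases hwX : w = X
  · subst hwX
    simp only [subst1, if_true] at hw
    exact .inl hw
  · simp only [subst1, hwX, if_false, varIn_var_iff] at hw
    subst hw
    exact .inr ⟨hwX, hws⟩

theorem replSome_subst_subst1 (s : Term F V) : ReplSome X t s (s.subst (subst1 X t)) := by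
  induction s using induction with
  | var x =>
    by_cases hx : x = X
    · subst hx
      simpa [subst1] using ReplSome.repl
    · simpa [subst1, hx] using ReplSome.keep x
  | app f ss ih =>
    rw [subst_app]
    exact .app (List.forall₂_map_right_iff.2 (List.forall₂_same.2 ih))

theorem _root_.ReplSome.subst_eq {σ : Subst F V} (hσ : σ X = t.subst σ) {s u : Term F V}
    (h : ReplSome X t s u) : s.subst σ = u.subst σ := by
  induction s using induction generalizing u with
  | var x =>
    cases h with
    | keep => rfl
    | repl => simpa using hσ
  | app f ss ih =>
    cases h with
    | app h =>
      rw [subst_app, subst_app]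
      congr 1
      rw [List.map_eq_map_iff_forall₂]
      exact ((List.forall₂_and_left _ _).2 ⟨ih, h⟩).imp fun _ _ ⟨ihs, hsu⟩ => ihs hsu

end Term

section Unifiers

variable {F V : Type} {σ : Subst F V} {E N : EqSet F V} {a : Eqn F V}

theorem isUnifier_diff_union_iff (ha : a ∈ E) (hN : IsUnifier σ N ↔ a.1.subst σ = a.2.subst σ) :
    IsUnifier σ E ↔ IsUnifier σ (E \ {a} ∪ N) := by
  constructor
  · rintro hE e (⟨he, -⟩ | he)
    · exact hE e he
    · exact hN.2 (hE a ha) e he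
  · intro hE e he
    by_cases hea : e = a
    · subst hea
      exact hN.1 fun e' he' => hE e' (.inr he')
    · exact hE e (.inl ⟨he, hea⟩)

theorem isUnifier_insert_image_iff {g : Eqn F V → Eqn F V} (ha : a ∈ E)
    (hg : a.1.subst σ = a.2.subst σ → ∀ e ∈ E \ {a},
      ((g e).1.subst σ = (g e).2.subst σ ↔ e.1.subst σ = e.2.subst σ)) :
    IsUnifier σ E ↔ IsUnifier σ (insert a (g '' (E \ {a}))) := by
  constructor
  · rintro hE _ (rfl | ⟨e, he, rfl⟩)
    · exact hE _ ha
    · exact (hg (hE a ha) e he).2 (hE e he.1)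
  · intro hE e he
    have hσa := hE a (Set.mem_insert a _)
    by_cases hea : e = a
    · exact hea ▸ hσa
    · exact (hg hσa e ⟨he, hea⟩).1 (hE _ (.inr ⟨e, ⟨he, hea⟩, rfl⟩))

theorem isUnifier_zip_iff {f : F} {ss ts : List (Term F V)} (hlen : ss.length = ts.length) :
    IsUnifier σ {e | e ∈ ss.zip ts} ↔ (Term.app f ss).subst σ = (Term.app f ts).subst σ := by
  rw [Term.subst_app, Term.subst_app, Term.app.injEq, List.map_eq_map_iff_forall₂,
    List.forall₂_iff_zip]
  simp [IsUnifier, hlen]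

variable {X : V} {t : Term F V}

theorem not_varIn_of_isUnifier (hσ : IsUnifier σ E) (hmem : (Term.var X, t) ∈ E)
    (hne : Term.var X ≠ t) : ¬ Term.VarIn X t := fun hX =>
  Term.subst_ne_of_varIn hX hne.symm (by simpa using hσ _ hmem)

variable [DecidableEq V]

theorem isUnifier_replSome_iff {g : Eqn F V → Eqn F V} (hmem : (Term.var X, t) ∈ E)
    (hg : ∀ e ∈ E \ {(Term.var X, t)}, ReplSomeEqn X t e (g e)) :
    IsUnifier σ E ↔ IsUnifier σ (insert (Term.var X, t) (g '' (E \ {(Term.var X, t)}))) := by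
  refine isUnifier_insert_image_iff hmem fun hσ e he => ?_
  have hX : σ X = t.subst σ := by simpa using hσ
  rw [← (hg e he).1.subst_eq hX, ← (hg e he).2.subst_eq hX]

theorem MMStepL.isUnifier_iff {l : MLabel F V} {s s' : MState F V} (h : MMStepL l s s') :
    IsUnifier σ s.1 ↔ IsUnifier σ s'.1 := by
  cases h with
  | decomp hmem hlen => exact isUnifier_diff_union_iff hmem (isUnifier_zip_iff hlen)
  | del hmem =>
    rw [← Set.union_empty (_ \ _)]
    exact isUnifier_diff_union_iff hmem (by simp [IsUnifier])
  | orient hmem _ => exact isUnifier_diff_union_iff hmem (by simp [IsUnifier, eq_comm])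
  | elim hmem _ _ =>
    exact isUnifier_replSome_iff hmem fun e _ =>
      ⟨Term.replSome_subst_subst1 e.1, Term.replSome_subst_subst1 e.2⟩
  | elim' hmem _ _ _ hg => exact isUnifier_replSome_iff hmem hg

end Unifiers

section SolvedVariables

variable {F V : Type} {E N : EqSet F V} {a : Eqn F V} {X Z : V} {t u : Term F V}

structure SolvedIn (X : V) (u : Term F V) (E : EqSet F V) : Prop where
  mem : (Term.var X, u) ∈ E
  not_varIn : ¬ Term.VarIn X u
  eq_of_occursInEqn : ∀ e ∈ E, occursInEqn X e → e = (Term.var X, u)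

theorem SolvedIn.not_occursInEqn (h : SolvedIn Z u E) (ha : a ∈ E) (hne : a ≠ (Term.var Z, u)) :
    ¬ occursInEqn Z a :=
  fun hZ => hne (h.eq_of_occursInEqn a ha hZ)

theorem SolvedIn.not_occursElsewhere (h : SolvedIn X u E) (hmem : (Term.var X, t) ∈ E) :
    ¬ occursElsewhere X (Term.var X, t) E := by
  rintro ⟨e, he, hne, hX⟩
  exact hne ((h.eq_of_occursInEqn e he hX).trans (h.eq_of_occursInEqn _ hmem (.inl .var)).symm)

theorem SolvedIn.diff_union (h : SolvedIn Z u E) (hne : a ≠ (Term.var Z, u))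
    (hN : ∀ e ∈ N, ¬ occursInEqn Z e) : SolvedIn Z u (E \ {a} ∪ N) := by
  refine ⟨.inl ⟨h.mem, hne.symm⟩, h.not_varIn, ?_⟩
  rintro e (⟨he, -⟩ | he) hZ
  · exact h.eq_of_occursInEqn e he hZ
  · exact absurd hZ (hN e he)

variable [DecidableEq V]

theorem solvedIn_insert_subst1_self (ht : ¬ Term.VarIn X t) (S : EqSet F V) :
    SolvedIn X t (insert (Term.var X, t) (Eqn.subst (subst1 X t) '' S)) := by
  refine ⟨.inl rfl, ht, ?_⟩
  have hX : ∀ s : Term F V, ¬ Term.VarIn X (s.subst (subst1 X t)) := fun s hX =>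
    (Term.varIn_subst_subst1 hX).elim ht fun h => h.1 rfl
  rintro _ (rfl | ⟨e, -, rfl⟩) hXe
  · rfl
  · exact (hXe.elim (hX _) (hX _)).elim

theorem SolvedIn.insert_subst1 (h : SolvedIn Z u E) (hmem : (Term.var X, t) ∈ E) (hZX : Z ≠ X) :
    SolvedIn Z (u.subst (subst1 X t))
      (insert (Term.var X, t) (Eqn.subst (subst1 X t) '' (E \ {(Term.var X, t)}))) := by
  have hne : ((Term.var Z, u) : Eqn F V) ≠ (Term.var X, t) := by simp [hZX]
  have hZt : ¬ occursInEqn Z (Term.var X, t) := h.not_occursInEqn hmem hne.symm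
  have htransfer : ∀ s : Term F V, Term.VarIn Z (s.subst (subst1 X t)) → Term.VarIn Z s :=
    fun s hZ => (Term.varIn_subst_subst1 hZ).resolve_left (fun h' => hZt (.inr h')) |>.2
  refine ⟨.inr ⟨(Term.var Z, u), ⟨h.mem, hne⟩, by simp [Eqn.subst, subst1, hZX]⟩,
    fun hZ => h.not_varIn (htransfer u hZ), ?_⟩
  rintro _ (rfl | ⟨e, he, rfl⟩) hZ
  · exact absurd hZ hZt
  · have he' : e = (Term.var Z, u) :=
      h.eq_of_occursInEqn e he.1 (hZ.imp (htransfer e.1) (htransfer e.2))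
    rw [he']
    simp [Eqn.subst, subst1, hZX]

end SolvedVariables

section Invariant

variable {F V : Type} [DecidableEq V]

theorem MMStepL.unifiable_iff {l : MLabel F V} {s s' : MState F V} (h : MMStepL l s s') :
    Unifiable s.1 ↔ Unifiable s'.1 :=
  exists_congr fun _ => h.isUnifier_iff

theorem MMReach.unifiable_iff {s s' : MState F V} (h : MMReach s s') :
    Unifiable s.1 ↔ Unifiable s'.1 := by
  induction h with
  | refl => rfl
  | tail _ hstep ih =>
    obtain ⟨_, hstep⟩ := hstep
    exact ih.trans hstep.unifiable_iff

theorem MMStepL.solvedIn {l : MLabel F V} {s s' : MState F V} (h : MMStepL l s s')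
    (hU : Unifiable s'.1) (hs : ∀ Z ∈ s.2, ∃ u, SolvedIn Z u s.1) :
    ∀ Z ∈ s'.2, ∃ u, SolvedIn Z u s'.1 := by
  cases h with
  | @decomp E H f ss ts hmem _ =>
    intro Z hZ
    obtain ⟨u, hu⟩ := hs Z hZ
    have hne : (Term.app f ss, Term.app f ts) ≠ ((Term.var Z, u) : Eqn F V) := by simp
    refine ⟨u, hu.diff_union hne fun ⟨s, t⟩ he hZe => hu.not_occursInEqn hmem hne ?_⟩
    obtain ⟨hss, hts⟩ := List.of_mem_zip he
    exact hZe.imp (.app hss) (.app hts)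
  | @del E H X hmem =>
    intro Z hZ
    obtain ⟨u, hu⟩ := hs Z hZ
    have hne : (Term.var X, Term.var X) ≠ ((Term.var Z, u) : Eqn F V) := by
      rintro ⟨⟩
      exact hu.not_varIn .var
    exact ⟨u, by simpa using hu.diff_union (N := ∅) hne (by simp)⟩
  | @orient E H X t hmem hnv =>
    intro Z hZ
    obtain ⟨u, hu⟩ := hs Z hZ
    have hne : (t, Term.var X) ≠ ((Term.var Z, u) : Eqn F V) := by
      rintro ⟨⟩
      exact hnv trivial
    refine ⟨u, hu.diff_union hne fun e he hZe => hu.not_occursInEqn hmem hne ?_⟩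
    rw [Set.mem_singleton_iff.1 he] at hZe
    exact hZe.symm
  | @elim E H X t hmem hne _ =>
    intro Z hZ
    by_cases hZX : Z = X
    · subst hZX
      obtain ⟨σ, hσ⟩ := hU
      exact ⟨t, solvedIn_insert_subst1_self
        (not_varIn_of_isUnifier hσ (Set.mem_insert _ _) hne) _⟩
    · obtain ⟨u, hu⟩ := hs Z ((Set.mem_insert_iff.1 hZ).resolve_left hZX)
      exact ⟨_, hu.insert_subst1 hmem hZX⟩
  | elim' hmem _ hocc hXH _ =>
    obtain ⟨u, hu⟩ := hs _ hXH
    exact absurd hocc (hu.not_occursElsewhere hmem)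

theorem MMReach.solvedIn {E : EqSet F V} {s : MState F V} (h : MMReach (E, ∅) s)
    (hU : Unifiable s.1) : ∀ Z ∈ s.2, ∃ u, SolvedIn Z u s.1 := by
  induction h with
  | refl => simp
  | tail _ hstep ih =>
    obtain ⟨_, hstep⟩ := hstep
    exact hstep.solvedIn hU (ih (hstep.unifiable_iff.2 hU))

end Invariant

theorem stmt16_general {F V : Type} [DecidableEq V] (E : EqSet F V) :
    ∀ (E' : EqSet F V) (H : Set V), MMReach (E, ∅) (E', H) →
      ∀ (X : V) (t : Term F V) (s' : MState F V),
        MMStepL (MLabel.elim' X t) (E', H) s' →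
        ¬ Unifiable E ∧ ¬ Unifiable E' := by
  intro E' H hreach X t s' hstep
  have hE' : ¬ Unifiable E' := by
    intro hU
    cases hstep with
    | elim' hmem _ hocc hXH _ =>
      obtain ⟨u, hu⟩ := hreach.solvedIn hU X hXH
      exact hu.not_occursElsewhere hmem hocc
  exact ⟨fun hU => hE' (hreach.unifiable_iff.1 hU), hE'⟩

/-- In any run of MMA⁻ on a finite equation set `E`, if action (5')
is performed at some step, then `E` is not unifiable, and neither is the equation
set current at that step. -/
theorem stmt16 {F V : Type} [DecidableEq V] (E : EqSet F V) (hfin : E.Finite) :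
    ∀ (E' : EqSet F V) (H : Set V), MMReach (E, ∅) (E', H) →
      ∀ (X : V) (t : Term F V) (s' : MState F V),
        MMStepL (MLabel.elim' X t) (E', H) s' →
        ¬ Unifiable E ∧ ¬ Unifiable E' :=
  stmt16_general E
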